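/- arXiv:1810.10913 — 2 statements merged into one kernel-verified Lean document; each statement's English description precedes it below -/
import Mathlib

section
/- Let A be a nonempty linear order and let (I u) for u : ℕ → A be a family of linear orders such that for all a, b ∈ A and every u, the order I (a::b::u) is order-isomorphic to I u (equivalently, I is constant up to order isomorphism on 2-tail-equivalence classes). Then the replacement X = Σₗ (u : A^ω), I u satisfies (A ×ₗ A) ×ₗ X ≅ X; that is, X is invariant under left multiplication by A². -/
/-!
Prepending two letters, `((a, b), u) ↦ a::b::u`, is an order isomorphism
`(A ×ₗ A) ×ₗ A^ω ≃o A^ω`. After reassociating, `(A ×ₗ A) ×ₗ X` is the replacement of the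
fibres `I u` over `(A ×ₗ A) ×ₗ A^ω`; transporting its base along that isomorphism and each fibre
along `I (a::b::u) ≃o I u` yields `X`.
-/

/-- The sequence with first entry `a` followed by the entries of `u`. -/
def consSeq {α : Type*} (a : α) (u : ℕ → α) : ℕ → α
  | 0 => a
  | n + 1 => u n

namespace Sigma.Lex

variable {ι κ α : Type*} {β : ι → Type*} {γ : κ → Type*}

def orderIsoCongr [Preorder ι] [Preorder κ] [∀ i, Preorder (β i)] [∀ k, Preorder (γ k)]
    (e : ι ≃o κ) (f : ∀ i, β i ≃o γ (e i)) : (Σₗ i, β i) ≃o Σₗ k, γ k where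
  toEquiv := ofLex.trans ((Equiv.sigmaCongr e.toEquiv fun i => (f i).toEquiv).trans toLex)
  map_rel_iff' := by
    rintro ⟨i, x⟩ ⟨j, y⟩
    change Sigma.Lex (· < ·) (fun _ => (· ≤ ·)) ⟨e i, f i x⟩ ⟨e j, f j y⟩ ↔
      Sigma.Lex (· < ·) (fun _ => (· ≤ ·)) ⟨i, x⟩ ⟨j, y⟩
    constructor
    · rw [Sigma.lex_iff]
      rintro (hij | ⟨hij, hxy⟩)
      · exact .left _ _ (e.lt_iff_lt.mp hij)
      · obtain rfl := e.injective hij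
        exact .right _ _ ((f i).le_iff_le.mp hxy)
    · rintro (⟨_, _, hij⟩ | ⟨_, _, hxy⟩)
      · exact .left _ _ (e.lt_iff_lt.mpr hij)
      · exact .right _ _ ((f _).le_iff_le.mpr hxy)

def prodLexAssoc [Preorder α] [Preorder ι] [∀ i, Preorder (β i)] :
    α ×ₗ (Σₗ i, β i) ≃o Σₗ p : α ×ₗ ι, β (ofLex p).2 where
  toFun p := toLex ⟨toLex ((ofLex p).1, (ofLex (ofLex p).2).1), (ofLex (ofLex p).2).2⟩
  invFun q := toLex ((ofLex (ofLex q).1).1, toLex ⟨(ofLex (ofLex q).1).2, (ofLex q).2⟩)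
  left_inv _ := rfl
  right_inv _ := rfl
  map_rel_iff' := by
    rintro ⟨a, i, x⟩ ⟨b, j, y⟩
    change Sigma.Lex (· < ·) (fun _ => (· ≤ ·))
        (⟨toLex (a, i), x⟩ : Σ p : α ×ₗ ι, β (ofLex p).2) ⟨toLex (b, j), y⟩ ↔
      Prod.Lex (· < ·) (· ≤ ·) (a, toLex (⟨i, x⟩ : Sigma β)) (b, toLex ⟨j, y⟩)
    constructor
    · rintro (⟨_, _, hlt⟩ | ⟨_, _, hxy⟩)
      · obtain hab | ⟨rfl, hij⟩ := Prod.Lex.lt_iff.mp hlt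
        · exact .left _ _ hab
        · exact .right _ (.left _ _ hij)
      · exact .right _ (.right _ _ hxy)
    · rintro (⟨_, _, hab⟩ | ⟨_, ⟨_, _, hij⟩ | ⟨_, _, hxy⟩⟩)
      · exact .left _ _ (Prod.Lex.toLex_lt_toLex.mpr (.inl hab))
      · exact .left _ _ (Prod.Lex.toLex_lt_toLex.mpr (.inr ⟨rfl, hij⟩))
      · exact .right _ _ hxy

end Sigma.Lex

section ConsSeq

variable (A : Type*) [LinearOrder A]

theorem strictMono_toLex_consSeq :
    StrictMono fun p : A ×ₗ Lex (ℕ → A) => toLex (consSeq (ofLex p).1 (ofLex (ofLex p).2)) := by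
  rintro ⟨a, u⟩ ⟨b, v⟩ hlt
  obtain hab | ⟨rfl, n, hagree, hn⟩ := Prod.Lex.lt_iff.mp hlt
  · exact ⟨0, fun _ h => absurd h (Nat.not_lt_zero _), hab⟩
  · refine ⟨n + 1, fun j hj => ?_, hn⟩
    cases j with
    | zero => rfl
    | succ j => exact hagree j (Nat.lt_of_succ_lt_succ hj)

noncomputable def consSeqOrderIso : A ×ₗ Lex (ℕ → A) ≃o Lex (ℕ → A) :=
  (strictMono_toLex_consSeq A).orderIsoOfRightInverse _
    (fun v => toLex (ofLex v 0, toLex fun n => ofLex v (n + 1)))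
    fun v => by funext n; cases n <;> rfl

noncomputable def consSeq₂OrderIso : (A ×ₗ A) ×ₗ Lex (ℕ → A) ≃o Lex (ℕ → A) :=
  (Prod.Lex.prodLexAssoc A A _).trans
    ((Prod.Lex.prodLexCongr (OrderIso.refl A) (consSeqOrderIso A)).trans (consSeqOrderIso A))

end ConsSeq

theorem replacement_invariant_left_mul_sq_general (A : Type*) [LinearOrder A]
    (I : (ℕ → A) → Type*) [∀ u, LinearOrder (I u)]
    (h : ∀ (a b : A) (u : ℕ → A), Nonempty (I (consSeq a (consSeq b u)) ≃o I u)) :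
    Nonempty
      (Lex (Lex (A × A) × Lex (Σ u : Lex (ℕ → A), I (ofLex u))) ≃o
        Lex (Σ u : Lex (ℕ → A), I (ofLex u))) :=
  ⟨Sigma.Lex.prodLexAssoc.trans
    (Sigma.Lex.orderIsoCongr (consSeq₂OrderIso A) fun _ => (h _ _ _).some.symm)⟩

/-- If the fibers `I u` are constant up to order isomorphism on
2-tail-equivalence classes (i.e. `I (a::b::u) ≅ I u` for all `a`, `b`, `u`),
then the replacement `X = Σₗ (u : A^ω), I u` satisfies `(A ×ₗ A) ×ₗ X ≅ X`. -/
theorem replacement_invariant_left_mul_sq (A : Type*) [LinearOrder A] [Nonempty A]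
    (I : (ℕ → A) → Type*) [∀ u, LinearOrder (I u)]
    (h : ∀ (a b : A) (u : ℕ → A), Nonempty (I (consSeq a (consSeq b u)) ≃o I u)) :
    Nonempty
      (Lex (Lex (A × A) × Lex (Σ u : Lex (ℕ → A), I (ofLex u))) ≃o
        Lex (Σ u : Lex (ℕ → A), I (ofLex u))) :=
  replacement_invariant_left_mul_sq_general A I h
end

section
/- There are order isomorphisms I_even ×ₗ ℕ ≅ I_odd, I_odd ×ₗ ℕ ≅ I_even, and I ×ₗ ℕ ≅ I, where ℕ carries its usual order. Consequently each of I_even, I_odd, I is invariant under right multiplication by ω²: I_even ×ₗ (ℕ ×ₗ ℕ) ≅ I_even, I_odd ×ₗ (ℕ ×ₗ ℕ) ≅ I_odd, and I ×ₗ (ℕ ×ₗ ℕ) ≅ I. -/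
open Ordinal

/-- Exponent of the `j`-th term (from the right, counting from `j = 0`) of `L i`. -/
def e (i : ℤ) (j : ℕ) : ℕ := ((j : ℤ) + 1 + max i 0).toNat

/-- Coefficient of the `j`-th term (from the right, counting from `j = 0`) of `L i`. -/
def c (i : ℤ) (j : ℕ) : ℕ := ((j : ℤ) + 1 + max (-i) 0).toNat

/-- The order `L i = … + c₂·ω^{e₂} + c₁·ω^{e₁} + c₀·ω^{e₀} + ω^ω`: an
`ω*`-indexed sum of ordinals followed on the right by a copy of `ω^ω`. -/
abbrev L (i : ℤ) : Type :=
  ((Lex (Σ j : ℕ, (Ordinal.ToType (ω ^ (e i j) * (c i j)))ᵒᵈ))ᵒᵈ) ⊕ₗ Ordinal.ToType (ω ^ ω)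

/-- `I_even = … + L₋₂ + L₀ + L₂ + …` -/
abbrev Ieven : Type := Lex (Σ k : ℤ, L (2 * k))

/-- `I_odd = … + L₋₁ + L₁ + L₃ + …` -/
abbrev Iodd : Type := Lex (Σ k : ℤ, L (2 * k + 1))

/-- `I = … + L₋₁ + L₀ + L₁ + …` -/
abbrev I : Type := Lex (Σ k : ℤ, L k)

/-! Multiplying a lexicographic sum on the right by `ω` multiplies every summand by `ω`. Hence
`L i ×ₗ ω` replaces each term `α` of `L i` by `ω * α` and keeps the final `ω ^ ω`, because
`ω * ω ^ ω = ω ^ ω`. For `i ≥ 0` this turns `ω ^ (i + j) * j` into `ω ^ (i + 1 + j) * j`, the terms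
of `L (i + 1)`. For `i = -n < 0` it turns `ω ^ j * (n + j)` into `ω ^ (j + 1) * (n + j)`, which are
the terms of `L (i + 1)` except the last one `ω * n`, and that one is absorbed: `ω * n + ω ^ ω = ω ^ ω`.
So `L i ×ₗ ω ≅ L (i + 1)`, the `ℤ`-indexed sums shift by one, and `ω ^ 2` is handled by associativity. -/

universe u

noncomputable section

instance Sum.Lex.wellFoundedLT {α β : Type*} [LT α] [LT β] [WellFoundedLT α] [WellFoundedLT β] :
    WellFoundedLT (α ⊕ₗ β) :=
  ⟨Sum.lex_wf wellFounded_lt wellFounded_lt⟩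

namespace OrderIso

def castIndex {ι : Type*} (A : ι → Type*) [∀ i, LE (A i)] {i j : ι} (h : i = j) : A i ≃o A j :=
  h ▸ .refl _

def prodLexDualDistrib (α β : Type*) [Preorder α] [Preorder β] :
    (α ×ₗ β)ᵒᵈ ≃o αᵒᵈ ×ₗ βᵒᵈ where
  toEquiv := OrderDual.ofDual.trans <| ofLex.trans <|
    (Equiv.prodCongr OrderDual.toDual OrderDual.toDual).trans toLex
  map_rel_iff' {a b} := by
    change _ ↔ OrderDual.ofDual b ≤ OrderDual.ofDual a
    rw [Prod.Lex.le_iff, Prod.Lex.le_iff]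
    simp only [Equiv.trans_apply, Equiv.prodCongr_apply, ofLex_toLex, Prod.map_fst, Prod.map_snd,
      OrderDual.toDual_lt_toDual, OrderDual.toDual_le_toDual, EmbeddingLike.apply_eq_iff_eq,
      eq_comm]

def prodLexProdLex {α β γ δ ε : Type*} [Preorder α] [Preorder β] [Preorder γ] [Preorder δ]
    [Preorder ε] (f : α ×ₗ γ ≃o β) (g : β ×ₗ δ ≃o ε) : α ×ₗ γ ×ₗ δ ≃o ε :=
  (Prod.Lex.prodLexAssoc α γ δ).symm.trans ((Prod.Lex.prodLexCongr f (.refl δ)).trans g)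

section SigmaLex

variable {ι κ β : Type*} [LinearOrder ι] [LinearOrder κ] [LinearOrder β]
  {A A' : ι → Type*} [∀ i, LinearOrder (A i)] [∀ i, LinearOrder (A' i)]

def sigmaLexCongr {B : κ → Type*} [∀ k, LinearOrder (B k)] (e : ι ≃o κ)
    (f : ∀ i, A i ≃o B (e i)) : (Σₗ i, A i) ≃o Σₗ k, B k := by
  refine StrictMono.orderIsoOfSurjective (fun p => toLex ⟨e (ofLex p).1, f _ (ofLex p).2⟩) ?_ ?_
  · rintro ⟨i, x⟩ ⟨j, y⟩ (⟨_, _, h⟩ | ⟨_, _, h⟩)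
    · exact Sigma.Lex.left _ _ (e.lt_iff_lt.2 h)
    · exact Sigma.Lex.right _ _ ((f _).lt_iff_lt.2 h)
  · rintro ⟨k, y⟩
    obtain ⟨i, rfl⟩ := e.surjective k
    exact ⟨toLex ⟨i, (f i).symm y⟩,
      congrArg (fun z : B (e i) => toLex (Sigma.mk (e i) z)) ((f i).apply_symm_apply y)⟩

def sigmaLexCongrRight (f : ∀ i, A i ≃o A' i) : (Σₗ i, A i) ≃o Σₗ i, A' i :=
  sigmaLexCongr (.refl ι) f

def sigmaLexProdLexDistrib : (Σₗ i, A i) ×ₗ β ≃o Σₗ i, A i ×ₗ β := by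
  refine StrictMono.orderIsoOfSurjective
    (fun p => toLex ⟨(ofLex (ofLex p).1).1, toLex ((ofLex (ofLex p).1).2, (ofLex p).2)⟩) ?_ ?_
  · rintro ⟨⟨i, x⟩, y⟩ ⟨⟨j, x'⟩, y'⟩ (⟨_, _, ⟨_, _, h⟩ | ⟨_, _, h⟩⟩ | ⟨_, h⟩)
    · exact Sigma.Lex.left _ _ h
    · exact Sigma.Lex.right _ _ (Prod.Lex.left _ _ h)
    · exact Sigma.Lex.right _ _ (Prod.Lex.right _ h)
  · rintro ⟨i, x, y⟩
    exact ⟨toLex (toLex ⟨i, x⟩, y), rfl⟩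

def dualSigmaLexDualProdLexDistrib : (Σₗ i, (A i)ᵒᵈ)ᵒᵈ ×ₗ β ≃o (Σₗ i, (A i ×ₗ β)ᵒᵈ)ᵒᵈ :=
  (Prod.Lex.prodLexCongr (.refl _) (dualDual β)).trans <|
    (prodLexDualDistrib _ βᵒᵈ).symm.trans <| OrderIso.dual <|
      sigmaLexProdLexDistrib.trans <| sigmaLexCongrRight fun i => (prodLexDualDistrib (A i) β).symm

end SigmaLex

def sigmaLexNatSucc (A : ℕ → Type*) [∀ n, LinearOrder (A n)] :
    (Σₗ n, A n) ≃o A 0 ⊕ₗ Σₗ n, A (n + 1) := by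
  refine StrictMono.orderIsoOfSurjective
    (fun p => Nat.casesOn (motive := fun n => A n → A 0 ⊕ₗ Σₗ n, A (n + 1)) (ofLex p).1
      (fun x => toLex (.inl x)) (fun n x => toLex (.inr (toLex ⟨n, x⟩))) (ofLex p).2) ?_ ?_
  · rintro ⟨_ | m, x⟩ ⟨_ | n, y⟩ (⟨_, _, h⟩ | ⟨_, _, h⟩)
    all_goals first
      | exact absurd h (by omega)
      | exact Sum.Lex.sep _ _
      | exact Sum.Lex.inl h
      | exact Sum.Lex.inr (Sigma.Lex.left _ _ (by omega))
      | exact Sum.Lex.inr (Sigma.Lex.right _ _ h)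
  · rintro (x | ⟨n, x⟩)
    · exact ⟨toLex ⟨0, x⟩, rfl⟩
    · exact ⟨toLex ⟨n + 1, x⟩, rfl⟩

end OrderIso

namespace Ordinal

def orderIsoOfTypeLTEq {α β : Type u} [LinearOrder α] [WellFoundedLT α] [LinearOrder β]
    [WellFoundedLT β] (h : typeLT α = typeLT β) : α ≃o β :=
  .ofRelIsoLT (Classical.choice (type_eq.1 h))

def toTypeSumLex (a b : Ordinal.{u}) : a.ToType ⊕ₗ b.ToType ≃o (a + b).ToType :=
  orderIsoOfTypeLTEq <| by
    conv_rhs => rw [type_toType, ← type_toType a, ← type_toType b]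
    exact type_sum_lex _ _

def toTypeProdLex (a : Ordinal.{u}) (β : Type u) [LinearOrder β] [WellFoundedLT β] :
    a.ToType ×ₗ β ≃o ((typeLT β) * a).ToType :=
  orderIsoOfTypeLTEq <| by
    conv_rhs => rw [type_toType, ← type_toType a]
    exact type_prod_lex _ _

theorem omega0_mul_opow_omega0 : ω * ω ^ ω = ω ^ ω := by
  simpa [one_add_omega0] using (opow_add ω 1 ω).symm

end Ordinal

/-- `RevSum α` is the `ω*`-indexed sum `⋯ + α 2 + α 1 + α 0`. -/
abbrev RevSum (α : ℕ → Ordinal.{u}) : Type u := (Σₗ j, (α j).ToTypeᵒᵈ)ᵒᵈ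

namespace RevSum

variable (α : ℕ → Ordinal.{u})

def prodLex (β : Type u) [LinearOrder β] [WellFoundedLT β] :
    RevSum α ×ₗ β ≃o RevSum fun j => (typeLT β) * α j :=
  OrderIso.dualSigmaLexDualProdLexDistrib.trans <| OrderIso.dual <|
    OrderIso.sigmaLexCongrRight fun j => (Ordinal.toTypeProdLex (α j) β).dual

def succSumLex : RevSum α ≃o RevSum (fun j => α (j + 1)) ⊕ₗ (α 0).ToType :=
  (OrderIso.sigmaLexNatSucc _).dual.trans <| (OrderIso.sumLexDualAntidistrib _ _).trans <|
    OrderIso.sumLexCongr (.refl _) (OrderIso.dualDual _).symm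

variable {α} {b : Ordinal.{u}}

def sumLexProdLex {β : Type u} [LinearOrder β] [WellFoundedLT β] (h : (typeLT β) * b = b) :
    (RevSum α ⊕ₗ b.ToType) ×ₗ β ≃o RevSum (fun j => (typeLT β) * α j) ⊕ₗ b.ToType :=
  (Prod.Lex.sumLexProdLexDistrib _ _ _).trans <| OrderIso.sumLexCongr (prodLex α β) <|
    (Ordinal.toTypeProdLex b β).trans (OrderIso.castIndex Ordinal.ToType h)

def sumLexAbsorb (h : α 0 + b = b) :
    RevSum α ⊕ₗ b.ToType ≃o RevSum (fun j => α (j + 1)) ⊕ₗ b.ToType :=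
  (OrderIso.sumLexCongr (succSumLex α) (.refl _)).trans <| (OrderIso.sumLexAssoc _ _ _).trans <|
    OrderIso.sumLexCongr (.refl _) <|
      (Ordinal.toTypeSumLex _ _).trans (OrderIso.castIndex Ordinal.ToType h)

end RevSum

namespace L

/-- `L i = RevSum (term i) ⊕ₗ (ω ^ ω).ToType`. -/
abbrev term (i : ℤ) (j : ℕ) : Ordinal.{0} := ω ^ e i j * c i j

theorem omega0_mul_term_of_nonneg {i : ℤ} (h : 0 ≤ i) (j : ℕ) :
    ω * term i j = term (i + 1) j := by
  have he : e (i + 1) j = e i j + 1 := by unfold e; omega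
  have hc : c (i + 1) j = c i j := by unfold c; omega
  rw [term, term, he, hc, ← mul_assoc, ← pow_succ']

theorem omega0_mul_term_of_neg {i : ℤ} (h : i < 0) (j : ℕ) :
    ω * term i j = term (i + 1) (j + 1) := by
  have he : e (i + 1) (j + 1) = e i j + 1 := by unfold e; omega
  have hc : c (i + 1) (j + 1) = c i j := by unfold c; omega
  rw [term, term, he, hc, ← mul_assoc, ← pow_succ']

theorem term_add_omega0_opow_omega0 (i : ℤ) (j : ℕ) : term i j + ω ^ ω = ω ^ ω :=
  Ordinal.add_omega0_opow <| by
    rw [term, ← Ordinal.opow_natCast]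
    exact Ordinal.opow_mul_lt_opow (Ordinal.natCast_lt_omega0 _) (Ordinal.natCast_lt_omega0 _)

def prodLexNat (i : ℤ) : L i ×ₗ ℕ ≃o L (i + 1) :=
  have hω : typeLT ℕ = ω := type_nat_lt
  (RevSum.sumLexProdLex (α := term i) (by rw [hω]; exact Ordinal.omega0_mul_opow_omega0)).trans <|
    if h : 0 ≤ i then
      OrderIso.sumLexCongr (OrderIso.castIndex RevSum <| funext fun j => by
        rw [hω, omega0_mul_term_of_nonneg h]) (.refl _)
    else
      (OrderIso.sumLexCongr (OrderIso.castIndex RevSum <| funext fun j => by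
        rw [hω, omega0_mul_term_of_neg (not_le.1 h)]) (.refl _)).trans
        (RevSum.sumLexAbsorb (term_add_omega0_opow_omega0 _ _)).symm

def sigmaLexProdLexNat (f : ℤ → ℤ) : (Σₗ k, L (f k)) ×ₗ ℕ ≃o Σₗ k, L (f k + 1) :=
  OrderIso.sigmaLexProdLexDistrib.trans (OrderIso.sigmaLexCongrRight fun k => prodLexNat (f k))

end L

def Ieven.prodLexNat : Ieven ×ₗ ℕ ≃o Iodd := L.sigmaLexProdLexNat (2 * ·)

def Iodd.prodLexNat : Iodd ×ₗ ℕ ≃o Ieven :=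
  (L.sigmaLexProdLexNat (2 * · + 1)).trans <|
    OrderIso.sigmaLexCongr (OrderIso.addRight 1) fun k => OrderIso.castIndex L (by simp; ring)

def I.prodLexNat : I ×ₗ ℕ ≃o I :=
  (L.sigmaLexProdLexNat id).trans <| OrderIso.sigmaLexCongr (OrderIso.addRight 1) fun _ => .refl _

end

/-- `I_even ×ₗ ω ≅ I_odd`, `I_odd ×ₗ ω ≅ I_even` and `I ×ₗ ω ≅ I`;
consequently each of the three orders is invariant under right multiplication
by `ω²`. -/
theorem Ieven_Iodd_I_mul_omega :
    Nonempty (Lex (Ieven × ℕ) ≃o Iodd) ∧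
    Nonempty (Lex (Iodd × ℕ) ≃o Ieven) ∧
    Nonempty (Lex (I × ℕ) ≃o I) ∧
    Nonempty (Lex (Ieven × Lex (ℕ × ℕ)) ≃o Ieven) ∧
    Nonempty (Lex (Iodd × Lex (ℕ × ℕ)) ≃o Iodd) ∧
    Nonempty (Lex (I × Lex (ℕ × ℕ)) ≃o I) :=
  ⟨⟨Ieven.prodLexNat⟩, ⟨Iodd.prodLexNat⟩, ⟨I.prodLexNat⟩,
    ⟨Ieven.prodLexNat.prodLexProdLex Iodd.prodLexNat⟩,
    ⟨Iodd.prodLexNat.prodLexProdLex Ieven.prodLexNat⟩,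
    ⟨I.prodLexNat.prodLexProdLex I.prodLexNat⟩⟩
end
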